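/- arXiv:math/0412141 — 4 statements merged into one kernel-verified Lean document; each statement's English description precedes it below -/
import Mathlib

section
/- Let $(X,d)$ be a metric space and $\mu$ a finite doubling measure on $X$ for which every open set is measurable. Let $E$ be a Borel subset of $X$. Assume there are constants $r_0, c > 0$ such that $\mu(E \cap B) \ge c\, \mu(B)$ for every ball $B$ with radius $r(B) < r_0$ and center in $X$. Then $\mu(E \cap B) = \mu(B)$ for every ball $B$. -/
/-!
Doubling bounds the measure of every ball of radius `ε` centred in a fixed ball `B` from below by
`μ B / C ^ n`, so a finite doubling measure admits no infinite `ε`-separated set inside `B`. Hence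
balls are totally bounded and the space is separable, which is what Lebesgue's density theorem for
doubling measures needs. At almost every point of `Eᶜ` the relative measure of `Eᶜ` in small balls
tends to `1`, whereas the hypothesis bounds it by `1 - c`; so `μ Eᶜ = 0`.
-/

open MeasureTheory Metric Filter Set
open scoped ENNReal Topology

/-- A dimension function: positive, continuous, nondecreasing on `(0,∞)`, tending to `0` at `0`. -/
def IsDimFun (f : ℝ → ℝ) : Prop :=
  (∀ r > 0, 0 < f r) ∧ ContinuousOn f (Set.Ioi 0) ∧ MonotoneOn f (Set.Ioi 0) ∧
    Filter.Tendsto f (nhdsWithin 0 (Set.Ioi 0)) (nhds 0)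

/-- The Hausdorff measure associated with a dimension function `f`. -/
noncomputable def hmf {X : Type*} [EMetricSpace X] [MeasurableSpace X] [BorelSpace X]
    (f : ℝ → ℝ) : Measure X :=
  MeasureTheory.Measure.mkMetric (fun d => ENNReal.ofReal (f d.toReal))

open scoped NNReal

section TotallyBounded

variable {X : Type*} [MetricSpace X] [MeasurableSpace X] [BorelSpace X]

theorem totallyBounded_of_forall_le_measure_closedBall (μ : Measure X) [IsFiniteMeasure μ]
    {s : Set X} (h : ∀ ε > 0, ∃ δ > 0, ∀ x ∈ s, δ ≤ μ (closedBall x ε)) :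
    TotallyBounded s := by
  rw [Metric.totallyBounded_iff]
  intro ε hε
  by_contra! hnet
  obtain ⟨δ, hδ, hδs⟩ := h (ε / 3) (by positivity)
  have hnext : ∀ t : Set X, t.Finite → ∃ x, x ∈ s ∧ ∀ y ∈ t, ε ≤ dist x y := by
    intro t ht
    obtain ⟨x, hxs, hx⟩ := not_subset.1 (hnet t ht)
    simp only [mem_iUnion₂, mem_ball, not_exists, not_lt] at hx
    exact ⟨x, hxs, hx⟩
  obtain ⟨u, hu⟩ := seq_of_forall_finite_exists hnext
  have hdisj :
      Pairwise fun m n ↦ Disjoint (closedBall (u m) (ε / 3)) (closedBall (u n) (ε / 3)) := by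
    intro m n hmn
    have hsep : ε ≤ dist (u m) (u n) := by
      rcases hmn.lt_or_gt with hlt | hgt
      · rw [dist_comm]; exact (hu n).2 _ (mem_image_of_mem u hlt)
      · exact (hu m).2 _ (mem_image_of_mem u hgt)
    exact closedBall_disjoint_closedBall (by linarith)
  have hfin := Measure.finite_const_le_meas_of_disjoint_iUnion μ hδ
    (fun n ↦ measurableSet_closedBall) hdisj (measure_ne_top μ _)
  exact infinite_univ (hfin.subset fun n _ ↦ hδs _ (hu n).1)

end TotallyBounded

def IsDoublingWith {X : Type*} [MetricSpace X] [MeasurableSpace X] (μ : Measure X) (C : ℝ≥0) :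
    Prop :=
  ∀ (x : X) (r : ℝ), 0 < r → μ (closedBall x (2 * r)) ≤ C * μ (closedBall x r)

namespace IsDoublingWith

variable {X : Type*} [MetricSpace X] [MeasurableSpace X] {μ : Measure X} {C : ℝ≥0}

theorem measure_closedBall_two_pow_mul_le (hμ : IsDoublingWith μ C) (x : X) (n : ℕ) {r : ℝ}
    (hr : 0 < r) : μ (closedBall x (2 ^ n * r)) ≤ C ^ n * μ (closedBall x r) := by
  induction n with
  | zero => simp
  | succ n ih =>
    calc μ (closedBall x (2 ^ (n + 1) * r)) = μ (closedBall x (2 * (2 ^ n * r))) := by ring_nf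
      _ ≤ C * μ (closedBall x (2 ^ n * r)) := hμ x _ (by positivity)
      _ ≤ C * (C ^ n * μ (closedBall x r)) := by gcongr
      _ = C ^ (n + 1) * μ (closedBall x r) := by rw [pow_succ', mul_assoc]

theorem measure_closedBall_le_of_mem (hμ : IsDoublingWith μ C) {x y : X} {R r : ℝ}
    (hy : y ∈ closedBall x R) (hr : 0 < r) {n : ℕ} (hn : 2 * R ≤ 2 ^ n * r) :
    μ (closedBall x R) ≤ C ^ n * μ (closedBall y r) := by
  have hsub : closedBall x R ⊆ closedBall y (2 ^ n * r) := by
    intro z hz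
    rw [mem_closedBall] at hy hz ⊢
    linarith [dist_triangle_right z y x]
  exact (measure_mono hsub).trans (hμ.measure_closedBall_two_pow_mul_le y n hr)

theorem measure_closedBall_pos (hμ : IsDoublingWith μ C) (h₀ : μ ≠ 0) (x : X) {r : ℝ}
    (hr : 0 < r) : 0 < μ (closedBall x r) := by
  refine pos_iff_ne_zero.2 fun hx ↦ h₀ (Measure.measure_univ_eq_zero.1 ?_)
  rw [← iUnion_closedBall_nat x]
  refine measure_iUnion_null fun m ↦ ?_
  obtain ⟨n, hn⟩ := pow_unbounded_of_one_lt (m / r) one_lt_two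
  rw [div_lt_iff₀ hr] at hn
  refine nonpos_iff_eq_zero.1 ?_
  calc μ (closedBall x m) ≤ μ (closedBall x (2 ^ n * r)) :=
        measure_mono (closedBall_subset_closedBall hn.le)
    _ ≤ C ^ n * μ (closedBall x r) := hμ.measure_closedBall_two_pow_mul_le x n hr
    _ = 0 := by rw [hx, mul_zero]

theorem isUnifLocDoublingMeasure (hμ : IsDoublingWith μ C) : IsUnifLocDoublingMeasure μ :=
  ⟨⟨C, eventually_nhdsWithin_of_forall fun _ hr x ↦ hμ x _ hr⟩⟩

variable [BorelSpace X] [IsFiniteMeasure μ]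

theorem totallyBounded_closedBall (hμ : IsDoublingWith μ C) (h₀ : μ ≠ 0) (x : X) {R : ℝ}
    (hR : 0 < R) : TotallyBounded (closedBall x R) := by
  refine totallyBounded_of_forall_le_measure_closedBall μ fun ε hε ↦ ?_
  obtain ⟨n, hn⟩ := pow_unbounded_of_one_lt (2 * R / ε) one_lt_two
  rw [div_lt_iff₀ hε] at hn
  refine ⟨μ (closedBall x R) / C ^ n, ?_, fun y hy ↦ ?_⟩
  · exact ENNReal.div_pos (hμ.measure_closedBall_pos h₀ x hR).ne' (by simp)
  · exact ENNReal.div_le_of_le_mul' (hμ.measure_closedBall_le_of_mem hy hε hn.le)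

theorem secondCountableTopology (hμ : IsDoublingWith μ C) (h₀ : μ ≠ 0) :
    SecondCountableTopology X := by
  suffices TopologicalSpace.SeparableSpace X from UniformSpace.secondCountable_of_separable X
  rcases isEmpty_or_nonempty X with hX | ⟨⟨x⟩⟩
  · infer_instance
  rw [← TopologicalSpace.isSeparable_univ_iff, ← iUnion_closedBall_nat x]
  exact .iUnion fun n ↦ ((hμ.totallyBounded_closedBall h₀ x n.cast_add_one_pos).subset
    (closedBall_subset_closedBall (by linarith))).isSeparable

end IsDoublingWith

theorem measure_compl_eq_zero_of_le_measure_inter_closedBall {X : Type*} [MetricSpace X]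
    [MeasurableSpace X] [BorelSpace X] [SecondCountableTopology X] {μ : Measure X}
    [IsFiniteMeasure μ] [IsUnifLocDoublingMeasure μ] {E : Set X} (hE : MeasurableSet E)
    {c : ℝ≥0} (hc : 0 < c) {r₀ : ℝ} (hr₀ : 0 < r₀)
    (h : ∀ (x : X) (r : ℝ), 0 < r → r < r₀ →
      c * μ (closedBall x r) ≤ μ (E ∩ closedBall x r)) :
    μ Eᶜ = 0 := by
  have hcompl : ∀ x r, 0 < r → r < r₀ →
      μ (Eᶜ ∩ closedBall x r) ≤ (1 - c) * μ (closedBall x r) := by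
    intro x r hr hrr₀
    rw [ENNReal.sub_mul fun _ _ ↦ measure_ne_top μ _, one_mul]
    refine ENNReal.le_sub_of_add_le_right (by finiteness) ?_
    calc μ (Eᶜ ∩ closedBall x r) + c * μ (closedBall x r)
        ≤ μ (closedBall x r \ E) + μ (closedBall x r ∩ E) := by
          rw [sdiff_eq_compl_inter, inter_comm _ E]; gcongr; exact h x r hr hrr₀
      _ = μ (closedBall x r) := by rw [add_comm, measure_inter_add_sdiff _ hE]
  have hfalse : ∀ᵐ y ∂μ.restrict Eᶜ, False := by
    filter_upwards [IsUnifLocDoublingMeasure.ae_tendsto_measure_inter_div μ Eᶜ 1] with y hy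
    have hdensity := hy (fun _ ↦ y) id tendsto_id
      (eventually_nhdsWithin_of_forall fun r hr ↦ mem_closedBall_self (by simpa using hr.out.le))
    have hle : ∀ᶠ r in 𝓝[>] 0, μ (Eᶜ ∩ closedBall y r) / μ (closedBall y r) ≤ 1 - c := by
      filter_upwards [Ioo_mem_nhdsGT hr₀] with r hr
      exact ENNReal.div_le_of_le_mul (hcompl y r hr.1 hr.2)
    exact (le_of_tendsto hdensity hle).not_gt
      (ENNReal.sub_lt_self ENNReal.one_ne_top one_ne_zero (by exact_mod_cast hc.ne'))
  simpa [ae_iff] using hfalse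

/-- Positive local density forces full measure on all balls. -/
theorem stmt2 {X : Type*} [MetricSpace X] [MeasurableSpace X] [BorelSpace X]
    (μ : Measure X) [IsFiniteMeasure μ]
    (hdoub : ∃ lam : ℝ, 1 < lam ∧ ∀ (x : X) (r : ℝ), 0 < r →
      μ (Metric.closedBall x (2 * r)) ≤ ENNReal.ofReal lam * μ (Metric.closedBall x r))
    (E : Set X) (hE : MeasurableSet E)
    (r₀ c : ℝ) (hr₀ : 0 < r₀) (hc : 0 < c)
    (h : ∀ (x : X) (r : ℝ), 0 < r → r < r₀ →
      ENNReal.ofReal c * μ (Metric.closedBall x r) ≤ μ (E ∩ Metric.closedBall x r)) :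
    ∀ (x : X) (r : ℝ), 0 < r → μ (E ∩ Metric.closedBall x r) = μ (Metric.closedBall x r) := by
  intro x r _
  rcases eq_or_ne μ 0 with rfl | h₀
  · simp
  obtain ⟨lam, -, hlam⟩ := hdoub
  have hμ : IsDoublingWith μ lam.toNNReal := hlam
  have := hμ.secondCountableTopology h₀
  have := hμ.isUnifLocDoublingMeasure
  have hEc : μ Eᶜ = 0 :=
    measure_compl_eq_zero_of_le_measure_inter_closedBall hE (Real.toNNReal_pos.2 hc) hr₀ h
  rw [inter_comm, measure_inter_conull hEc]
end

section
/- Let $(X,d)$ be a metric space and $\mu$ a finite measure on $X$. Let $B$ be a ball in $X$ and $(E_n)$ a sequence of $\mu$-measurable sets. If there exists a constant $c > 0$ such that $\limsup_{n\to\infty} \mu(B \cap E_n) \ge c\, \mu(B)$, then $\mu(B \cap \limsup_{n\to\infty} E_n) \ge c^2\, \mu(B)$. -/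
/-! The reverse Fatou lemma for the finite measure `μ` restricted to the ball `B` gives
`c μ(B) ≤ limsup μ(B ∩ Eₙ) ≤ μ(B ∩ limsup Eₙ) ≤ μ(B)`; in particular `c ≤ 1` unless `μ(B) = 0`,
so `c² μ(B) ≤ c μ(B) ≤ μ(B ∩ limsup Eₙ)`. -/

open MeasureTheory Metric Filter Set
open scoped ENNReal Topology

theorem ENNReal.sq_mul_le_of_mul_le_of_le {a m b : ℝ≥0∞} (hab : a * m ≤ b) (hbm : b ≤ m) :
    a ^ 2 * m ≤ b := by
  rcases eq_or_ne m 0 with rfl | hm₀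
  · simp
  rcases eq_or_ne m ∞ with rfl | hm
  · rcases eq_or_ne a 0 with rfl | ha
    · simp
    · rw [ENNReal.mul_top ha, top_le_iff] at hab
      simp [hab]
  have ha : a ≤ 1 := by
    rw [← ENNReal.mul_le_mul_iff_left hm₀ hm, one_mul]
    exact hab.trans hbm
  calc a ^ 2 * m = a * (a * m) := by ring
    _ ≤ 1 * (a * m) := by gcongr
    _ ≤ b := by rwa [one_mul]

theorem MeasureTheory.limsup_measure_le_measure_limsup {α : Type*} [MeasurableSpace α]
    (μ : Measure α) [IsFiniteMeasure μ] {E : ℕ → Set α} (hE : ∀ n, NullMeasurableSet (E n) μ) :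
    limsup (fun n => μ (E n)) atTop ≤ μ (limsup E atTop) := by
  have hanti : Antitone fun j => ⋃ n ≥ j, E n := fun i j hij =>
    biUnion_mono (fun n hn => le_trans hij hn) fun _ _ => subset_rfl
  rw [limsup_eq_iInf_iSup_of_nat, limsup_eq_iInf_iSup_of_nat]
  simp only [iInf_eq_iInter, iSup_eq_iUnion]
  rw [hanti.measure_iInter (fun j => .biUnion (to_countable _) fun n _ => hE n)
    ⟨0, measure_ne_top μ _⟩]
  exact iInf_mono fun j => iSup₂_le fun n hn => measure_mono (subset_biUnion_of_mem hn)

theorem MeasureTheory.limsup_measure_inter_le_measure_inter_limsup {α : Type*}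
    [MeasurableSpace α] (μ : Measure α) [IsFiniteMeasure μ] (s : Set α) {E : ℕ → Set α}
    (hE : ∀ n, MeasurableSet (E n)) :
    limsup (fun n => μ (s ∩ E n)) atTop ≤ μ (s ∩ limsup E atTop) := by
  have := limsup_measure_le_measure_limsup (μ.restrict s) fun n => (hE n).nullMeasurableSet
  simpa only [Measure.restrict_apply (hE _), Measure.restrict_apply (.measurableSet_limsup hE),
    inter_comm] using this

theorem stmt3_general {X : Type*} [MetricSpace X] [MeasurableSpace X]
    (μ : Measure X) [IsFiniteMeasure μ]
    (x₀ : X) (R : ℝ) (E : ℕ → Set X) (hE : ∀ n, MeasurableSet (E n))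
    (c : ℝ)
    (h : ENNReal.ofReal c * μ (Metric.closedBall x₀ R) ≤
      Filter.limsup (fun n => μ (Metric.closedBall x₀ R ∩ E n)) Filter.atTop) :
    ENNReal.ofReal c ^ 2 * μ (Metric.closedBall x₀ R) ≤
      μ (Metric.closedBall x₀ R ∩ Filter.limsup E Filter.atTop) :=
  ENNReal.sq_mul_le_of_mul_le_of_le
    (h.trans (limsup_measure_inter_le_measure_inter_limsup μ _ hE)) (measure_mono inter_subset_left)

/-- Positive limsup of measures of intersections gives positive measure of the limsup set. -/
theorem stmt3 {X : Type*} [MetricSpace X] [MeasurableSpace X]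
    (μ : Measure X) [IsFiniteMeasure μ]
    (x₀ : X) (R : ℝ) (E : ℕ → Set X) (hE : ∀ n, MeasurableSet (E n))
    (c : ℝ) (hc : 0 < c)
    (h : ENNReal.ofReal c * μ (Metric.closedBall x₀ R) ≤
      Filter.limsup (fun n => μ (Metric.closedBall x₀ R ∩ E n)) Filter.atTop) :
    ENNReal.ofReal c ^ 2 * μ (Metric.closedBall x₀ R) ≤
      μ (Metric.closedBall x₀ R ∩ Filter.limsup E Filter.atTop) :=
  stmt3_general μ x₀ R E hE c h
end

section
/- ($K_{G,B}$ covering lemma) Let $(B_i)_{i\in\mathbb{N}}$ be a sequence of balls in $\mathbb{R}^k$ with $r(B_i) \to 0$, and let $f$ be a dimension function such that for every ball $B$, $\mathcal{H}^k(B \cap \limsup_i B_i^f) = \mathcal{H}^k(B)$. Then there exists an absolute constant $\kappa > 0$ (depending only on $k$ and the comparability constants between $\mathcal{H}^k$ and volume) such that for every ball $B$ and every $G > 1$, there is a finite subcollection $K_{G,B} \subseteq \{B_i : i \ge G\}$ such that the balls $\{B_i^f : B_i \in K_{G,B}\}$ are pairwise disjoint, contained in $B$, and satisfy $\mathcal{H}^k\big(\bigcup_{L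 \in K_{G,B}} L^f\big) \ge \kappa\, \mathcal{H}^k(B)$. -/
open MeasureTheory Metric Filter Set
open scoped ENNReal Topology

/-!
A point of `B(x₀, R/2)` lying in infinitely many `B_i^f` lies in such balls of arbitrarily small
radius, all inside `B(x₀, R)`. The balls of a Haar measure are doubling, so Vitali's covering
theorem extracts from them a disjoint family (with indices `≥ G`) covering almost all of
`B(x₀, R/2) ∩ limsup B_i^f`, which by hypothesis has measure `2^{-d} μ(B(x₀, R))`. A finite
subfamily still captures more than half of that, which gives `κ = 2^{-(d+1)}`.
-/

open Module
open scoped NNReal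

lemma tendsto_rpow_comp_of_isDimFun {ι : Type*} {l : Filter ι} {f : ℝ → ℝ} (hf : IsDimFun f)
    {r : ι → ℝ} (hr : Tendsto r l (𝓝[>] 0)) {p : ℝ} (hp : 0 < p) :
    Tendsto (fun i => f (r i) ^ p) l (𝓝 0) := by
  have h := ((Real.continuousAt_rpow_const 0 p (Or.inr hp.le)).tendsto).comp (hf.2.2.2.comp hr)
  rwa [Real.zero_rpow hp.ne'] at h

lemma Set.Countable.exists_finset_lt_measure_biUnion {α ι : Type*} [MeasurableSpace α]
    {μ : Measure α} {u : Set ι} (hu : u.Countable) {B : ι → Set α} {c : ℝ≥0∞}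
    (h : c < μ (⋃ i ∈ u, B i)) : ∃ S : Finset ι, ↑S ⊆ u ∧ c < μ (⋃ i ∈ S, B i) := by
  have := hu.to_subtype
  have hdir : Directed (· ⊆ ·) fun T : Finset u => ⋃ i ∈ T, B i :=
    Monotone.directed_le fun _ _ hT => biUnion_subset_biUnion_left hT
  rw [biUnion_eq_iUnion, iUnion_eq_iUnion_finset, hdir.measure_iUnion] at h
  obtain ⟨T, hT⟩ := lt_iSup_iff.1 h
  classical
  refine ⟨T.image Subtype.val, by simp, ?_⟩
  rwa [Finset.set_biUnion_finset_image]

section AddHaar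

variable {E : Type*} [NormedAddCommGroup E] [NormedSpace ℝ E] [FiniteDimensional ℝ E]
  [MeasurableSpace E] [BorelSpace E] (μ : Measure E) [μ.IsAddHaarMeasure]

lemma addHaar_closedBall_le_of_mem_closedBall {c y : E} {ρ : ℝ} (hy : y ∈ closedBall c ρ) :
    μ (closedBall y (3 * (2 * ρ))) ≤ (7 ^ finrank ℝ E : ℝ≥0) * μ (closedBall c ρ) := by
  have hρ : 0 ≤ ρ := nonempty_closedBall.1 ⟨y, hy⟩
  have hsub : closedBall y (3 * (2 * ρ)) ⊆ closedBall c (7 * ρ) :=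
    closedBall_subset_closedBall' (by linarith [mem_closedBall.1 hy])
  calc μ (closedBall y (3 * (2 * ρ))) ≤ μ (closedBall c (7 * ρ)) := measure_mono hsub
    _ = (7 ^ finrank ℝ E : ℝ≥0) * μ (closedBall c ρ) := by
      rw [Measure.addHaar_closedBall_mul μ c (by norm_num) hρ, Measure.addHaar_closedBall_center μ c,
        ENNReal.ofReal_pow (by norm_num)]
      norm_num

lemma exists_pairwiseDisjoint_closedBall_ae_cover {x : ℕ → E} {ρ : ℕ → ℝ} (hρpos : ∀ i, 0 < ρ i)
    (hρ : Tendsto ρ atTop (𝓝 0)) {s U : Set E} (hU : IsOpen U)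
    (hs : s ⊆ U ∩ limsup (fun i => closedBall (x i) (ρ i)) atTop) (G : ℕ) :
    ∃ u : Set ℕ, (∀ i ∈ u, G ≤ i ∧ closedBall (x i) (ρ i) ⊆ U) ∧
      u.PairwiseDisjoint (fun i => closedBall (x i) (ρ i)) ∧
      μ (s \ ⋃ i ∈ u, closedBall (x i) (ρ i)) = 0 := by
  set B : ℕ → Set E := fun i => closedBall (x i) (ρ i)
  -- Vitali's theorem needs balls centred at the points of `s`, so each `B i` is indexed by
  -- a point `y ∈ B i` together with `i`, and seen as a subset of `closedBall y (2 * ρ i)`.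
  set t : Set (ℕ × E) := {p | G ≤ p.1 ∧ p.2 ∈ B p.1 ∧ B p.1 ⊆ U}
  have hfine : ∀ y ∈ s, ∀ ε > (0 : ℝ), ∃ p ∈ t, 2 * ρ p.1 ≤ ε ∧ p.2 = y := by
    intro y hy ε hε
    obtain ⟨δ, hδ, hδU⟩ := Metric.isOpen_iff.1 hU y (hs hy).1
    have hsmall : ∀ᶠ i in atTop, 2 * ρ i < min ε δ := by
      simpa using (hρ.const_mul 2).eventually_lt_const (by simp [hε, hδ] : 2 * (0 : ℝ) < min ε δ)
    obtain ⟨i, hyi, hρi, hGi⟩ := ((mem_limsup_iff_frequently_mem.1 (hs hy).2).and_eventually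
      (hsmall.and (eventually_ge_atTop G))).exists
    refine ⟨(i, y), ⟨hGi, hyi, ?_⟩, (hρi.trans_le (min_le_left _ _)).le, rfl⟩
    refine (closedBall_subset_closedBall' ?_).trans
      ((closedBall_subset_ball (hρi.trans_le (min_le_right _ _))).trans hδU)
    linarith [mem_closedBall'.1 hyi]
  obtain ⟨v, hvt, -, hvdisj, hvcov⟩ := Vitali.exists_disjoint_covering_ae μ s t
    (7 ^ finrank ℝ E) (fun p => 2 * ρ p.1) Prod.snd (fun p => B p.1)
    (fun p hp => closedBall_subset_closedBall' (by linarith [mem_closedBall'.1 hp.2.1]))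
    (fun p hp => addHaar_closedBall_le_of_mem_closedBall μ hp.2.1)
    (fun p _ => ⟨x p.1, ball_subset_interior_closedBall (mem_ball_self (hρpos p.1))⟩)
    (fun p _ => isClosed_closedBall) hfine
  refine ⟨Prod.fst '' v, ?_, ?_, by rwa [biUnion_image]⟩
  · rintro _ ⟨p, hp, rfl⟩
    exact ⟨(hvt hp).1, (hvt hp).2.2⟩
  · rintro _ ⟨p, hp, rfl⟩ _ ⟨q, hq, rfl⟩ hpq
    exact hvdisj hp hq fun h => hpq (congrArg Prod.fst h)

lemma addHaar_closedBall_half (x₀ : E) {R : ℝ} (hR : 0 ≤ R) :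
    μ (closedBall x₀ (R / 2)) = ENNReal.ofReal ((1 / 2) ^ finrank ℝ E) * μ (closedBall x₀ R) := by
  rw [div_eq_inv_mul, Measure.addHaar_closedBall_mul μ x₀ (by norm_num) hR,
    Measure.addHaar_closedBall_center μ x₀, one_div]

theorem exists_finset_pairwiseDisjoint_closedBall_measure_ge {x : ℕ → E} {ρ : ℕ → ℝ}
    (hρpos : ∀ i, 0 < ρ i) (hρ : Tendsto ρ atTop (𝓝 0)) {x₀ : E} {R : ℝ} (hR : 0 < R)
    (hfull : μ (closedBall x₀ (R / 2) ∩ limsup (fun i => closedBall (x i) (ρ i)) atTop) =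
      μ (closedBall x₀ (R / 2))) (G : ℕ) :
    ∃ S : Finset ℕ, (∀ i ∈ S, G ≤ i) ∧
      (S : Set ℕ).PairwiseDisjoint (fun i => closedBall (x i) (ρ i)) ∧
      (∀ i ∈ S, closedBall (x i) (ρ i) ⊆ closedBall x₀ R) ∧
      ENNReal.ofReal ((1 / 2) ^ (finrank ℝ E + 1)) * μ (closedBall x₀ R) ≤
        μ (⋃ i ∈ S, closedBall (x i) (ρ i)) := by
  set s := closedBall x₀ (R / 2) ∩ limsup (fun i => closedBall (x i) (ρ i)) atTop
  have hs : s ⊆ ball x₀ R ∩ limsup (fun i => closedBall (x i) (ρ i)) atTop :=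
    inter_subset_inter_left _ (closedBall_subset_ball (half_lt_self hR))
  obtain ⟨u, hu, hudisj, hucov⟩ :=
    exists_pairwiseDisjoint_closedBall_ae_cover μ hρpos hρ isOpen_ball hs G
  have hlt : ENNReal.ofReal ((1 / 2) ^ (finrank ℝ E + 1)) * μ (closedBall x₀ R) <
      μ (⋃ i ∈ u, closedBall (x i) (ρ i)) := by
    calc ENNReal.ofReal ((1 / 2) ^ (finrank ℝ E + 1)) * μ (closedBall x₀ R)
        < ENNReal.ofReal ((1 / 2) ^ finrank ℝ E) * μ (closedBall x₀ R) := by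
          refine ENNReal.mul_lt_mul_left (measure_closedBall_pos μ x₀ hR).ne'
            measure_closedBall_lt_top.ne ((ENNReal.ofReal_lt_ofReal_iff (by positivity)).2 ?_)
          exact pow_lt_pow_right_of_lt_one₀ (by norm_num) (by norm_num) (Nat.lt_succ_self _)
      _ = μ s := by rw [hfull, addHaar_closedBall_half μ x₀ hR.le]
      _ ≤ μ (⋃ i ∈ u, closedBall (x i) (ρ i)) := measure_mono_ae (ae_le_set.2 hucov)
  obtain ⟨S, hSu, hS⟩ := u.to_countable.exists_finset_lt_measure_biUnion hlt
  exact ⟨S, fun i hi => (hu i (hSu hi)).1, hudisj.subset hSu,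
    fun i hi => (hu i (hSu hi)).2.trans ball_subset_closedBall, hS.le⟩

end AddHaar

/-- The K_{G,B} covering lemma. -/
theorem stmt6 (k : ℕ) (hk : 0 < k)
    (x : ℕ → EuclideanSpace ℝ (Fin k)) (r : ℕ → ℝ) (hrpos : ∀ i, 0 < r i)
    (hr : Filter.Tendsto r Filter.atTop (nhds 0))
    (f : ℝ → ℝ) (hf : IsDimFun f)
    (H : ∀ (x₀ : EuclideanSpace ℝ (Fin k)) (R : ℝ), 0 < R →
      μH[(k : ℝ)] (Metric.closedBall x₀ R ∩
        Filter.limsup (fun i => Metric.closedBall (x i) ((f (r i)) ^ ((1 : ℝ) / k)))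
          Filter.atTop) = μH[(k : ℝ)] (Metric.closedBall x₀ R)) :
    ∃ κ : ℝ, 0 < κ ∧
      ∀ (x₀ : EuclideanSpace ℝ (Fin k)) (R : ℝ), 0 < R → ∀ G : ℕ, 1 < G →
        ∃ S : Finset ℕ,
          (∀ i ∈ S, G ≤ i) ∧
          ((S : Set ℕ).Pairwise fun i j =>
            Disjoint (Metric.closedBall (x i) ((f (r i)) ^ ((1 : ℝ) / k)))
              (Metric.closedBall (x j) ((f (r j)) ^ ((1 : ℝ) / k)))) ∧
          (∀ i ∈ S, Metric.closedBall (x i) ((f (r i)) ^ ((1 : ℝ) / k)) ⊆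
            Metric.closedBall x₀ R) ∧
          ENNReal.ofReal κ * μH[(k : ℝ)] (Metric.closedBall x₀ R) ≤
            μH[(k : ℝ)] (⋃ i ∈ S, Metric.closedBall (x i) ((f (r i)) ^ ((1 : ℝ) / k))) := by
  have hρpos : ∀ i, 0 < f (r i) ^ ((1 : ℝ) / k) :=
    fun i => Real.rpow_pos_of_pos (hf.1 _ (hrpos i)) _
  have hρ : Tendsto (fun i => f (r i) ^ ((1 : ℝ) / k)) atTop (𝓝 0) :=
    tendsto_rpow_comp_of_isDimFun hf (tendsto_nhdsWithin_iff.2 ⟨hr, .of_forall hrpos⟩)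
      (div_pos one_pos (Nat.cast_pos.2 hk))
  refine ⟨(1 / 2) ^ (k + 1), by positivity, fun x₀ R hR G _ => ?_⟩
  have := exists_finset_pairwiseDisjoint_closedBall_measure_ge μH[(k : ℝ)] hρpos hρ hR
    (H x₀ (R / 2) (half_pos hR)) G
  rwa [finrank_euclideanSpace_fin] at this
end

section
/- (Converse to the $K_{G,B}$ lemma) Let $(B_i)_{i\in\mathbb{N}}$ be a sequence of balls in $\mathbb{R}^k$ with $r(B_i) \to 0$, and $f$ a dimension function. Suppose there is a constant $\kappa > 0$ such that for every ball $B$ and every $G > 1$ there is a finite subcollection $K_{G,B} \subseteq \{B_i : i \ge G\}$ with the balls $\{L^f : L \in K_{G,B}\}$ pairwise disjoint, contained in $B$, and with $\mathcal{H}^k(\bigcup_{L \in K_{G,B}} L^f) \ge \kappa\, \mathcal{H}^k(B)$. Then for every ball $B$, $\mathcal{H}^k(B \cap \limsup_{i\to\infty} B_i^f) = \mathcal{H}^k(B)$. -/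
open MeasureTheory Metric Filter Set
open scoped ENNReal Topology

/-!
Each tail union `⋃_{i ≥ G} B_i^f` fills at least the proportion `κ` of every ball, so its
complement has density at most `1 - κ` at every point. By the Lebesgue density theorem almost
every point of the complement has density `1` in it, hence the complement is null. The limsup set
is the intersection of the tail unions over `G`, so it is conull as well.
-/

theorem MeasureTheory.Measure.eventually_measure_closedBall_lt_top {α : Type*}
    [PseudoMetricSpace α] [MeasurableSpace α] (μ : Measure α) [IsLocallyFiniteMeasure μ] (x : α) :
    ∀ᶠ r in 𝓝 (0 : ℝ), μ (closedBall x r) < ∞ :=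
  (tendsto_closedBall_smallSets x).eventually (μ.finiteAt_nhds x).eventually

theorem MeasureTheory.measure_compl_inter_div_le_one_sub {α : Type*} [MeasurableSpace α]
    {μ : Measure α} {A B : Set α} (hA : MeasurableSet A) (hB : μ B ≠ ∞) {c : ℝ≥0∞}
    (h : c * μ B ≤ μ (A ∩ B)) :
    μ (Aᶜ ∩ B) / μ B ≤ 1 - c := by
  have hcB : c * μ B ≠ ∞ := ne_top_of_le_ne_top hB (h.trans (measure_mono inter_subset_right))
  refine ENNReal.div_le_of_le_mul ?_
  rw [ENNReal.sub_mul fun _ _ => hB, one_mul]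
  refine ENNReal.le_sub_of_add_le_left hcB ?_
  calc c * μ B + μ (Aᶜ ∩ B) ≤ μ (B ∩ A) + μ (B \ A) := by
        rw [sdiff_eq_compl_inter, inter_comm B A]
        exact add_le_add_left h _
    _ = μ B := measure_inter_add_sdiff B hA

namespace Besicovitch

variable {β : Type*} [MetricSpace β] [SecondCountableTopology β] [HasBesicovitchCovering β]
  [MeasurableSpace β] [BorelSpace β] {μ : Measure β} [IsLocallyFiniteMeasure μ]
  {c : ℝ≥0∞}

theorem ae_mem_of_le_measure_inter_closedBall {A : Set β} (hA : MeasurableSet A) (hc : 0 < c)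
    (h : ∀ x, ∀ᶠ r in 𝓝[>] 0, c * μ (closedBall x r) ≤ μ (A ∩ closedBall x r)) :
    ∀ᵐ x ∂μ, x ∈ A := by
  suffices ae (μ.restrict Aᶜ) = ⊥ from mem_ae_iff.2 (ae_restrict_eq_bot.1 this)
  rw [← eventually_false_iff_eq_bot]
  filter_upwards [ae_tendsto_measure_inter_div μ Aᶜ] with x hx
  have hratio : ∀ᶠ r in 𝓝[>] 0, μ (Aᶜ ∩ closedBall x r) / μ (closedBall x r) ≤ 1 - c := by
    filter_upwards [h x, (μ.eventually_measure_closedBall_lt_top x).filter_mono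
      nhdsWithin_le_nhds] with r hr hfin
    exact measure_compl_inter_div_le_one_sub hA hfin.ne hr
  exact (ENNReal.sub_lt_self ENNReal.one_ne_top one_ne_zero hc.ne').not_ge
    (le_of_tendsto hx hratio)

theorem ae_mem_limsup_of_le_measure_iUnion_inter_closedBall {b : ℕ → Set β}
    (hb : ∀ i, MeasurableSet (b i)) (hc : 0 < c)
    (h : ∀ᶠ G in atTop, ∀ x, ∀ᶠ r in 𝓝[>] 0,
      c * μ (closedBall x r) ≤ μ ((⋃ i ≥ G, b i) ∩ closedBall x r)) :
    ∀ᵐ x ∂μ, x ∈ limsup b atTop := by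
  obtain ⟨G₀, hG₀⟩ := eventually_atTop.1 h
  have htail : ∀ G, ∀ᵐ x ∂μ, x ∈ ⋃ i ≥ G, b i := fun G =>
    (ae_mem_of_le_measure_inter_closedBall (.biUnion (to_countable _) fun i _ => hb i) hc
      (hG₀ (max G G₀) (le_max_right _ _))).mono fun x hx =>
      biUnion_mono (fun i hi => (le_max_left G G₀).trans hi) (fun _ _ => le_rfl) hx
  filter_upwards [ae_all_iff.2 htail] with x hx
  simpa [mem_limsup_iff_frequently_mem, frequently_atTop] using hx

end Besicovitch

theorem stmt7_general (k : ℕ)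
    (x : ℕ → EuclideanSpace ℝ (Fin k)) (r : ℕ → ℝ)
    (f : ℝ → ℝ)
    (κ : ℝ) (hκ : 0 < κ)
    (H : ∀ (x₀ : EuclideanSpace ℝ (Fin k)) (R : ℝ), 0 < R → ∀ G : ℕ, 1 < G →
        ∃ S : Finset ℕ,
          (∀ i ∈ S, G ≤ i) ∧
          ((S : Set ℕ).Pairwise fun i j =>
            Disjoint (Metric.closedBall (x i) ((f (r i)) ^ ((1 : ℝ) / k)))
              (Metric.closedBall (x j) ((f (r j)) ^ ((1 : ℝ) / k)))) ∧
          (∀ i ∈ S, Metric.closedBall (x i) ((f (r i)) ^ ((1 : ℝ) / k)) ⊆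
            Metric.closedBall x₀ R) ∧
          ENNReal.ofReal κ * μH[(k : ℝ)] (Metric.closedBall x₀ R) ≤
            μH[(k : ℝ)] (⋃ i ∈ S, Metric.closedBall (x i) ((f (r i)) ^ ((1 : ℝ) / k)))) :
    ∀ (x₀ : EuclideanSpace ℝ (Fin k)) (R : ℝ), 0 < R →
      μH[(k : ℝ)] (Metric.closedBall x₀ R ∩
        Filter.limsup (fun i => Metric.closedBall (x i) ((f (r i)) ^ ((1 : ℝ) / k)))
          Filter.atTop) = μH[(k : ℝ)] (Metric.closedBall x₀ R) := by
  intro x₀ R _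
  have : Measure.IsAddHaarMeasure (μH[(k : ℝ)] : Measure (EuclideanSpace ℝ (Fin k))) := by
    simpa using isAddHaarMeasure_hausdorffMeasure (E := EuclideanSpace ℝ (Fin k))
  refine measure_inter_conull (Besicovitch.ae_mem_limsup_of_le_measure_iUnion_inter_closedBall
    (fun i => measurableSet_closedBall) (ENNReal.ofReal_pos.2 hκ) ?_)
  filter_upwards [eventually_gt_atTop 1] with G hG y
  filter_upwards [self_mem_nhdsWithin] with ρ hρ
  obtain ⟨S, hSG, -, hS_sub, hS_measure⟩ := H y ρ hρ G hG
  exact hS_measure.trans (measure_mono (iUnion₂_subset fun i hi =>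
    subset_inter (subset_iUnion₂_of_subset i (hSG i hi) subset_rfl) (hS_sub i hi)))

/-- Converse to the K_{G,B} covering lemma. -/
theorem stmt7 (k : ℕ) (hk : 0 < k)
    (x : ℕ → EuclideanSpace ℝ (Fin k)) (r : ℕ → ℝ) (hrpos : ∀ i, 0 < r i)
    (hr : Filter.Tendsto r Filter.atTop (nhds 0))
    (f : ℝ → ℝ) (hf : IsDimFun f)
    (κ : ℝ) (hκ : 0 < κ)
    (H : ∀ (x₀ : EuclideanSpace ℝ (Fin k)) (R : ℝ), 0 < R → ∀ G : ℕ, 1 < G →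
        ∃ S : Finset ℕ,
          (∀ i ∈ S, G ≤ i) ∧
          ((S : Set ℕ).Pairwise fun i j =>
            Disjoint (Metric.closedBall (x i) ((f (r i)) ^ ((1 : ℝ) / k)))
              (Metric.closedBall (x j) ((f (r j)) ^ ((1 : ℝ) / k)))) ∧
          (∀ i ∈ S, Metric.closedBall (x i) ((f (r i)) ^ ((1 : ℝ) / k)) ⊆
            Metric.closedBall x₀ R) ∧
          ENNReal.ofReal κ * μH[(k : ℝ)] (Metric.closedBall x₀ R) ≤
            μH[(k : ℝ)] (⋃ i ∈ S, Metric.closedBall (x i) ((f (r i)) ^ ((1 : ℝ) / k)))) :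
    ∀ (x₀ : EuclideanSpace ℝ (Fin k)) (R : ℝ), 0 < R →
      μH[(k : ℝ)] (Metric.closedBall x₀ R ∩
        Filter.limsup (fun i => Metric.closedBall (x i) ((f (r i)) ^ ((1 : ℝ) / k)))
          Filter.atTop) = μH[(k : ℝ)] (Metric.closedBall x₀ R) :=
  stmt7_general k x r f κ hκ H
end
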